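/- Let S be an inverse semigroup. Then S is locally E-unitary if and only if the category L(S) is right-cancellative, i.e. every morphism of L(S) is an epimorphism. -/

import Mathlib

universe u

open CategoryTheory

/-- An inverse semigroup: every element has a unique (von Neumann) inverse,
selected by `star`. -/
class InverseSemigroup (S : Type u) extends Semigroup S where
  star : S → S
  mul_star_mul : ∀ s : S, s * star s * s = s
  star_mul_star : ∀ s : S, star s * s * star s = star s
  star_unique : ∀ s t : S, s * t * s = s → t * s * t = t → t = star s

namespace InverseSemigroup

variable {S : Type u} [InverseSemigroup S]

theorem star_star (s : S) : star (star s) = s :=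
  (star_unique (star s) s (star_mul_star s) (mul_star_mul s)).symm

theorem star_idem {e : S} (he : e * e = e) : star e = e :=
  (star_unique e e (by rw [he, he]) (by rw [he, he])).symm

theorem mul_idem {e f : S} (he : e * e = e) (hf : f * f = f) :
    (e * f) * (e * f) = e * f := by
  set x := star (e * f) with hx
  have hxfix : (e * f) * x * (e * f) = e * f := mul_star_mul (e * f)
  have hxfix' : x * (e * f) * x = x := star_mul_star (e * f)
  have he1 : ∀ y : S, e * (e * y) = e * y := fun y => by rw [← mul_assoc, he]
  have hf1 : ∀ y : S, f * (f * y) = f * y := fun y => by rw [← mul_assoc, hf]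
  have A : e * (f * (x * (e * f))) = e * f := by
    simpa only [mul_assoc] using hxfix
  have B1 : ∀ y : S, x * (e * (f * (x * y))) = x * y := fun y => by
    have h := congrArg (· * y) hxfix'
    simpa only [mul_assoc] using h
  have h1 : (e * f) * (f * x * e) * (e * f) = e * f := by
    simp only [mul_assoc, hf1, he1]
    exact A
  have h2 : (f * x * e) * (e * f) * (f * x * e) = f * x * e := by
    simp only [mul_assoc, he1, hf1, B1]
  have hC : f * x * e = x := by
    have := star_unique (e * f) (f * x * e) h1 h2
    rwa [← hx] at this
  have hCn : f * (x * e) = x := by simpa only [mul_assoc] using hC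
  have key : (f * (x * e)) * (f * (x * e)) = f * (x * e) := by
    simp only [mul_assoc, B1]
  have hD : x * x = x := by rw [← hCn]; exact key
  have hE : e * f = x := (star_unique x (e * f) hxfix' hxfix).trans (star_idem hD)
  rw [hE]; exact hD

theorem idem_comm {e f : S} (he : e * e = e) (hf : f * f = f) :
    e * f = f * e := by
  have hef : (e * f) * (e * f) = e * f := mul_idem he hf
  have hfe : (f * e) * (f * e) = f * e := mul_idem hf he
  have he1 : ∀ y : S, e * (e * y) = e * y := fun y => by rw [← mul_assoc, he]
  have hf1 : ∀ y : S, f * (f * y) = f * y := fun y => by rw [← mul_assoc, hf]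
  have hefn : e * (f * (e * f)) = e * f := by simpa only [mul_assoc] using hef
  have hfen : f * (e * (f * e)) = f * e := by simpa only [mul_assoc] using hfe
  have h1 : (e * f) * (f * e) * (e * f) = e * f := by
    simp only [mul_assoc, hf1, he1]
    exact hefn
  have h2 : (f * e) * (e * f) * (f * e) = f * e := by
    simp only [mul_assoc, he1, hf1]
    exact hfen
  have := star_unique (e * f) (f * e) h1 h2
  rw [this, star_idem hef]

theorem star_mul (a b : S) : star (a * b) = star b * star a := by
  set u := star a with hu
  set v := star b with hv
  have han : a * (u * a) = a := by simpa only [mul_assoc] using mul_star_mul a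
  have hun : u * (a * u) = u := by simpa only [mul_assoc] using star_mul_star a
  have hbn : b * (v * b) = b := by simpa only [mul_assoc] using mul_star_mul b
  have hvn : v * (b * v) = v := by simpa only [mul_assoc] using star_mul_star b
  have ha1 : ∀ y : S, a * (u * (a * y)) = a * y := fun y => by
    have h := congrArg (· * y) (mul_star_mul a); simpa only [mul_assoc] using h
  have hv1 : ∀ y : S, v * (b * (v * y)) = v * y := fun y => by
    have h := congrArg (· * y) (star_mul_star b); simpa only [mul_assoc] using h
  have hua : (u * a) * (u * a) = u * a := by
    simp only [mul_assoc]; rw [han]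
  have hbv : (b * v) * (b * v) = b * v := by
    simp only [mul_assoc]; rw [hvn]
  have hc : (b * v) * (u * a) = (u * a) * (b * v) := idem_comm hbv hua
  have hc1 : ∀ y : S, b * (v * (u * (a * y))) = u * (a * (b * (v * y))) := fun y => by
    have h := congrArg (· * y) hc; simpa only [mul_assoc] using h
  have goal1 : (a * b) * (v * u) * (a * b) = a * b := by
    simp only [mul_assoc]
    rw [hc1, ha1, hbn]
  have goal2 : (v * u) * (a * b) * (v * u) = v * u := by
    simp only [mul_assoc]
    rw [← hc1, hv1, hun]
  exact ((star_unique (a * b) (v * u) goal1 goal2)).symm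

theorem star_mul_self_idem (s : S) : (star s * s) * (star s * s) = star s * s := by
  have h := congrArg (star s * ·) (mul_star_mul s)
  simpa only [mul_assoc] using h

theorem mul_star_self_idem (s : S) : (s * star s) * (s * star s) = s * star s := by
  have h := congrArg (· * star s) (mul_star_mul s)
  simpa only [mul_assoc] using h

end InverseSemigroup

open InverseSemigroup

/-- The left-cancellative category `L(S)` of an inverse semigroup `S`: objects are
the idempotents, and a morphism `f ⟶ e` is an element `s` with `e * s = s` and
`s* * s = f`; composition is multiplication. -/
def LCat (S : Type u) [InverseSemigroup S] : Type u := {e : S // e * e = e}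

namespace LCat

variable {S : Type u} [InverseSemigroup S]

instance : Category.{u} (LCat S) where
  Hom f e := {s : S // e.1 * s = s ∧ star s * s = f.1}
  id e := ⟨e.1, by rw [e.2], by rw [star_idem e.2, e.2]⟩
  comp := fun {f g e} u v => ⟨v.1 * u.1, by
      constructor
      · rw [← mul_assoc, v.2.1]
      · calc star (v.1 * u.1) * (v.1 * u.1)
            = star u.1 * ((star v.1 * v.1) * u.1) := by
              rw [InverseSemigroup.star_mul]; simp only [mul_assoc]
          _ = star u.1 * (g.1 * u.1) := by rw [v.2.2]
          _ = star u.1 * u.1 := by rw [u.2.1]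
          _ = f.1 := u.2.2⟩
  id_comp := fun {f e} u => by
    apply Subtype.ext
    show u.1 * f.1 = u.1
    have h2 := u.2.2
    calc u.1 * f.1 = u.1 * (star u.1 * u.1) := by rw [h2]
      _ = u.1 := by rw [← mul_assoc, mul_star_mul]
  comp_id := fun {f e} u => by
    apply Subtype.ext
    show e.1 * u.1 = u.1
    exact u.2.1
  assoc := fun u v w => Subtype.ext (mul_assoc w.1 v.1 u.1).symm

end LCat

/-- An inverse semigroup is locally E-unitary if each local submonoid `eSe` is
E-unitary: whenever `d ∈ eSe` is idempotent, `s ∈ eSe`, and `d ≤ s` in the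
natural partial order (`d = s * d* * d`), then `s` is idempotent. -/
def LocallyEUnitary (S : Type u) [InverseSemigroup S] : Prop :=
  ∀ e : S, e * e = e →
    ∀ s d : S, e * s * e = s → e * d * e = d → d * d = d →
      d = s * star d * d → s * s = s

/-!
Let `α, β : e ⟶ g` agree after `φ`, with underlying elements `a, b, σ`. Then `w = a b*` lies
in `gSg` above the idempotent `(aσ)(aσ)*`, so local E-unitarity makes `w` idempotent; and two
elements `a, b` with `a* a = b* b` and `a b*` idempotent are equal. Conversely, if an idempotent
`d ∈ eSe` lies below `s ∈ eSe`, the morphisms `s` and `s* s` from `s* s` to `e` agree after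
`d : d ⟶ s* s`, so right cancellation gives `s = s* s`.
-/

namespace InverseSemigroup

variable {S : Type u} [InverseSemigroup S]

theorem mul_eq_of_mul_mul_eq {e s : S} (he : e * e = e) (h : e * s * e = s) : e * s = s := by
  rw [← h, ← mul_assoc, ← mul_assoc, he]

theorem mul_eq_of_mul_mul_eq' {e s : S} (he : e * e = e) (h : e * s * e = s) : s * e = s := by
  rw [← h, mul_assoc, he]

theorem star_mul_eq_of_mul_eq {e s : S} (he : e * e = e) (h : e * s = s) :
    star s * e = star s := by
  simpa only [star_mul, star_idem he] using congrArg star h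

theorem mul_star_eq_of_mul_eq {e s : S} (he : e * e = e) (h : s * e = s) :
    e * star s = star s := by
  simpa only [star_mul, star_idem he] using congrArg star h

theorem mul_mul_mul_eq_of_mul_eq {e s t : S} (hs : e * s = s) (ht : t * e = t) :
    e * (s * t) * e = s * t := by
  rw [← mul_assoc, hs, mul_assoc, ht]

theorem mul_star_mul_eq_of_star_mul_self_eq {a b : S} (h : star a * a = star b * b) :
    a * star b * b = a := by
  rw [mul_assoc, ← h, ← mul_assoc, mul_star_mul]

theorem eq_of_star_mul_self_eq_of_mul_star_idem {a b : S} (h : star a * a = star b * b)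
    (hidem : a * star b * (a * star b) = a * star b) : a = b := by
  have hba : b * star a = a * star b := by rw [← star_idem hidem, star_mul, star_star]
  have hb : a * star b * a = b := by
    rw [← hba]; exact mul_star_mul_eq_of_star_mul_self_eq h.symm
  calc a = a * star b * (a * star b * a) := by rw [hb, mul_star_mul_eq_of_star_mul_self_eq h]
    _ = b := by rw [← mul_assoc, hidem, hb]

theorem star_mul_self_mul_of_mul_eq {s d : S} (hd : d * d = d) (hsd : s * d = d) :
    star s * s * d = d := by
  have hds : d * star s = d := by
    simpa only [star_mul, star_idem hd] using congrArg star hsd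
  calc star s * s * d = star s * s * d * d := by rw [mul_assoc _ d d, hd]
    _ = d * (star s * s) * d := by rw [idem_comm (star_mul_self_idem s) hd]
    _ = d := by rw [← mul_assoc d, hds, mul_assoc, hsd, hd]

end InverseSemigroup

theorem LocallyEUnitary.eq_of_mul_eq_mul_right {S : Type u} [InverseSemigroup S]
    (hS : LocallyEUnitary S) {g a b c : S} (hg : g * g = g) (hga : g * a = a) (hgb : g * b = b)
    (hab : star a * a = star b * b) (hc : a * c = b * c) : a = b := by
  refine eq_of_star_mul_self_eq_of_mul_star_idem hab ?_
  set d := a * c * star (a * c)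
  have hdd : d * d = d := mul_star_self_idem (a * c)
  have hgac : g * (a * c) = a * c := by rw [← mul_assoc, hga]
  have hwd : a * star b * d = d := by
    rw [← mul_assoc, hc, ← mul_assoc, mul_star_mul_eq_of_star_mul_self_eq hab, ← hc]
  refine hS g hg (a * star b) d (mul_mul_mul_eq_of_mul_eq hga (star_mul_eq_of_mul_eq hg hgb))
    (mul_mul_mul_eq_of_mul_eq hgac (star_mul_eq_of_mul_eq hg hgac)) hdd ?_
  rw [star_idem hdd, mul_assoc (a * star b), hdd, hwd]

namespace LCat

variable {S : Type u} [InverseSemigroup S]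

theorem epi_of_locallyEUnitary (hS : LocallyEUnitary S) {f e : LCat S} (φ : f ⟶ e) : Epi φ :=
  ⟨fun {g} α β h => Subtype.ext <| hS.eq_of_mul_eq_mul_right g.2 α.2.1 β.2.1
    (α.2.2.trans β.2.2.symm) (congrArg Subtype.val h)⟩

theorem locallyEUnitary_of_forall_epi (h : ∀ (f e : LCat S) (φ : f ⟶ e), Epi φ) :
    LocallyEUnitary S := by
  intro e he s d hs _ hd hle
  have hsd : s * d = d := by
    rw [star_idem hd, mul_assoc, hd] at hle
    exact hle.symm
  have hss : star s * s * (star s * s) = star s * s := star_mul_self_idem s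
  let D : LCat S := ⟨d, hd⟩
  let Q : LCat S := ⟨star s * s, hss⟩
  let E : LCat S := ⟨e, he⟩
  let φ : D ⟶ Q := ⟨d, star_mul_self_mul_of_mul_eq hd hsd, by rw [star_idem hd, hd]⟩
  let α : Q ⟶ E := ⟨s, mul_eq_of_mul_mul_eq he hs, rfl⟩
  let β : Q ⟶ E := ⟨star s * s, by
    rw [← mul_assoc, mul_star_eq_of_mul_eq he (mul_eq_of_mul_mul_eq' he hs)],
    by rw [star_idem hss, hss]⟩
  have hαβ : α = β := (h D Q φ).left_cancellation α β <|
    Subtype.ext (hsd.trans (star_mul_self_mul_of_mul_eq hd hsd).symm)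
  have hs_eq : s = star s * s := congrArg Subtype.val hαβ
  conv_lhs => rw [hs_eq]
  rw [hss, ← hs_eq]

end LCat

/-- An inverse semigroup is locally E-unitary if and only if the category `L(S)`
is right-cancellative, i.e. every morphism of `L(S)` is an epimorphism. -/
theorem locallyEUnitary_iff_lcat_right_cancellative
    (S : Type u) [InverseSemigroup S] :
    LocallyEUnitary S ↔ ∀ (f e : LCat S) (φ : f ⟶ e), Epi φ :=
  ⟨fun hS _ _ φ => LCat.epi_of_locallyEUnitary hS φ, LCat.locallyEUnitary_of_forall_epi⟩
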